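/- (Carlitz–Gould identity, eq. (4).) For all natural numbers n and N, ([N]_q)^n = Σ_{k=0}^{n} S_q(n,k) · ∏_{i=0}^{k-1} [N−i]_q, where N−i denotes truncated natural subtraction (note that the product vanishes when k > N since [0]_q = 0). -/

import Mathlib

/-- The q-integer `[m]_q = Σ_{i=0}^{m-1} q^i`. -/
def qInt {K : Type*} [CommRing K] (q : K) (m : ℕ) : K :=
  ∑ i ∈ Finset.range m, q ^ i

/-- The Carlitz–Gould q-Stirling numbers of the second kind, defined by
`S_q(0,0) = 1`, `S_q(n+1,k+1) = q^k·S_q(n,k) + [k+1]_q·S_q(n,k+1)` and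
vanishing boundary values. -/
def qStirling {K : Type*} [CommRing K] (q : K) : ℕ → ℕ → K
  | 0, 0 => 1
  | 0, _ + 1 => 0
  | _ + 1, 0 => 0
  | n + 1, k + 1 => q ^ k * qStirling q n k + qInt q (k + 1) * qStirling q n (k + 1)

lemma qInt_zero {K : Type*} [CommRing K] (q : K) : qInt q 0 = 0 := by
  simp [qInt]

lemma qInt_split {K : Type*} [CommRing K] (q : K) {k N : ℕ} (h : k ≤ N) :
    qInt q N = qInt q k + q ^ k * qInt q (N - k) := by
  unfold qInt
  rw [Finset.mul_sum]
  have hN : k + (N - k) = N := Nat.add_sub_cancel' h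
  conv_lhs => rw [← hN]
  rw [Finset.sum_range_add]
  congr 1
  apply Finset.sum_congr rfl
  intro i _
  rw [← pow_add]

lemma fall_zero {K : Type*} [CommRing K] (q : K) {k N : ℕ} (h : N < k) :
    ∏ i ∈ Finset.range k, qInt q (N - i) = 0 := by
  apply Finset.prod_eq_zero (Finset.mem_range.2 h)
  simp [qInt]

lemma key {K : Type*} [CommRing K] (q : K) (k N : ℕ) :
    qInt q N * ∏ i ∈ Finset.range k, qInt q (N - i) =
      qInt q k * (∏ i ∈ Finset.range k, qInt q (N - i)) +
        q ^ k * ∏ i ∈ Finset.range (k + 1), qInt q (N - i) := by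
  rcases le_or_gt k N with h | h
  · rw [Finset.prod_range_succ, qInt_split q h]
    ring
  · rw [fall_zero q h, fall_zero q (h.trans (Nat.lt_succ_self k))]
    ring

lemma qStirling_eq_zero {K : Type*} [CommRing K] (q : K) :
    ∀ n k : ℕ, n < k → qStirling q n k = 0 := by
  intro n
  induction n with
  | zero => intro k hk; match k, hk with | k + 1, _ => rfl
  | succ n ih =>
    intro k hk
    match k, hk with
    | k + 1, hk =>
      have h1 : n < k := by omega
      have h2 : n < k + 1 := by omega
      simp [qStirling, ih _ h1, ih _ h2]

/-- Carlitz–Gould identity, eq. (4):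
`([N]_q)^n = Σ_{k=0}^{n} S_q(n,k) · ∏_{i=0}^{k-1} [N−i]_q`. -/
theorem carlitz_gould_identity {K : Type*} [CommRing K] (q : K) (n N : ℕ) :
    (qInt q N) ^ n =
      ∑ k ∈ Finset.range (n + 1), qStirling q n k * ∏ i ∈ Finset.range k, qInt q (N - i) := by
  induction n with
  | zero => simp [qStirling]
  | succ n ih =>
    rw [pow_succ, ih, Finset.sum_mul]
    have lhs_eq : ∀ k ∈ Finset.range (n + 1),
        qStirling q n k * (∏ i ∈ Finset.range k, qInt q (N - i)) * qInt q N =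
        qInt q k * (qStirling q n k * ∏ i ∈ Finset.range k, qInt q (N - i)) +
          q ^ k * (qStirling q n k * ∏ i ∈ Finset.range (k + 1), qInt q (N - i)) := by
      intro k _
      have := key q k N
      calc qStirling q n k * (∏ i ∈ Finset.range k, qInt q (N - i)) * qInt q N
          = qStirling q n k * (qInt q N * ∏ i ∈ Finset.range k, qInt q (N - i)) := by ring
        _ = qStirling q n k * (qInt q k * (∏ i ∈ Finset.range k, qInt q (N - i)) +
              q ^ k * ∏ i ∈ Finset.range (k + 1), qInt q (N - i)) := by rw [this]
        _ = _ := by ring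
    rw [Finset.sum_congr rfl lhs_eq, Finset.sum_add_distrib]
    -- RHS: drop the k = 0 term and reindex
    rw [Finset.sum_range_succ' (fun k => qStirling q (n+1) k * ∏ i ∈ Finset.range k, qInt q (N - i))]
    simp only [qStirling, Finset.range_zero, Finset.prod_empty, mul_one, mul_zero, add_zero,
      add_mul]
    rw [Finset.sum_add_distrib, add_comm]
    congr 1
    swap
    · -- Σ_{k<n+1} [k]*S(n,k)*fall k = Σ_{k<n+1} [k+1]*S(n,k+1)*fall(k+1)
      rw [Finset.sum_range_succ' (fun k => qInt q k * (qStirling q n k * ∏ i ∈ Finset.range k, qInt q (N - i)))]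
      rw [Finset.sum_range_succ (fun k => qInt q (k+1) * qStirling q n (k+1) * ∏ i ∈ Finset.range (k+1), qInt q (N - i))]
      rw [qStirling_eq_zero q n (n + 1) (Nat.lt_succ_self n)]
      simp [qInt_zero, mul_assoc]
    · apply Finset.sum_congr rfl
      intro k _
      ring
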